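/- Let α < β be real numbers, let w : ℝ → ℝ be integrable on [α, β], and set P(x) := ∫_α^x w(t) dt, with P(x) ≥ 0 for all x ∈ [α, β]. Let f and g be non-negative, non-increasing, differentiable functions on [α, β], and let p ≥ 1. Assume the functions f^p·w, g^p·w, and (f+g)^p·w are integrable on [α, β]. Then (∫_α^β f(x)^p w(x) dx)^{1/p} + (∫_α^β g(x)^p w(x) dx)^{1/p} ≤ 2^{1 − 1/p} · (∫_α^β (f(x) + g(x))^p w(x) dx)^{1/p}. (Here the three integrals are non-negative, so the real powers are well defined.) -/

import Mathlib

/-!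
If `P ≥ 0` on `[α, β]` and `ψ ≥ 0` is non-increasing there, then `∫ ψ w ≥ 0`: by the layer-cake
formula `∫ (ψ - ψ β) w = ∫_s ∫_{ψ > s} w ds`, and every superlevel set `{ψ > s}` meets `(α, β]`
in an initial segment `(α, c)` or `(α, c]`, over which `w` integrates to `P c ≥ 0`.
We apply this to `f ^ p`, `g ^ p` and to `(f + g) ^ p - f ^ p - g ^ p`, which is non-increasing
by convexity of `t ↦ t ^ p` and nonnegative by superadditivity. This gives
`∫ f ^ p w + ∫ g ^ p w ≤ ∫ (f + g) ^ p w` with both terms on the left nonnegative, and concavity of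
`t ↦ t ^ (1 / p)` yields `a ^ (1 / p) + b ^ (1 / p) ≤ 2 ^ (1 - 1 / p) * (a + b) ^ (1 / p)`.
-/

open Real MeasureTheory intervalIntegral Set

theorem ConvexOn.add_sub_le_add_sub {s : Set ℝ} {h : ℝ → ℝ} (hh : ConvexOn ℝ s h) {x y c : ℝ}
    (hx : x ∈ s) (hyc : y + c ∈ s) (hxy : x ≤ y) (hc : 0 ≤ c) :
    h (x + c) - h x ≤ h (y + c) - h y := by
  rcases hc.eq_or_lt with rfl | hc
  · simp
  have hxc : x + c ∈ s := hh.1.ordConnected.out hx hyc ⟨by linarith, by linarith⟩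
  have hy : y ∈ s := hh.1.ordConnected.out hx hyc ⟨hxy, by linarith⟩
  have h₁ : slope h x (x + c) ≤ slope h x (y + c) :=
    hh.slope_mono hx ⟨hxc, by simp [hc.ne']⟩ ⟨hyc, by simp; linarith⟩ (by linarith)
  have h₂ : slope h (y + c) x ≤ slope h (y + c) y :=
    hh.slope_mono hyc ⟨hx, by simp; linarith⟩ ⟨hy, by simp [hc.ne']⟩ hxy
  rw [slope_comm h (y + c), slope_comm h (y + c)] at h₂
  have h₁₂ := h₁.trans h₂
  rwa [slope_def_field, slope_def_field, add_sub_cancel_left, add_sub_cancel_left,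
    div_le_div_iff_of_pos_right hc] at h₁₂

theorem rpow_add_sub_rpow_sub_rpow_le {p a b a' b' : ℝ} (hp : 1 ≤ p) (ha : 0 ≤ a) (hb : 0 ≤ b)
    (haa' : a ≤ a') (hbb' : b ≤ b') :
    (a + b) ^ p - a ^ p - b ^ p ≤ (a' + b') ^ p - a' ^ p - b' ^ p := by
  have hconv := convexOn_rpow hp
  have ha' := hconv.add_sub_le_add_sub ha (mem_Ici.2 (by linarith)) haa' hb
  have hb' := hconv.add_sub_le_add_sub hb (mem_Ici.2 (by linarith)) hbb' (ha.trans haa')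
  rw [add_comm b, add_comm b'] at hb'
  linarith

theorem AntitoneOn.rpow_const_of_nonneg {s : Set ℝ} {p : ℝ} {f : ℝ → ℝ} (hf : AntitoneOn f s)
    (hf0 : ∀ x ∈ s, 0 ≤ f x) (hp : 0 ≤ p) : AntitoneOn (fun x => f x ^ p) s :=
  fun _ hx _ hy hxy => rpow_le_rpow (hf0 _ hy) (hf hx hy hxy) hp

theorem AntitoneOn.rpow_add_sub_rpow_sub_rpow {s : Set ℝ} {p : ℝ} {f g : ℝ → ℝ}
    (hf : AntitoneOn f s) (hg : AntitoneOn g s) (hf0 : ∀ x ∈ s, 0 ≤ f x)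
    (hg0 : ∀ x ∈ s, 0 ≤ g x) (hp : 1 ≤ p) :
    AntitoneOn (fun x => (f x + g x) ^ p - f x ^ p - g x ^ p) s :=
  fun _ hx _ hy hxy =>
    rpow_add_sub_rpow_sub_rpow_le hp (hf0 _ hy) (hg0 _ hy) (hf hx hy hxy) (hg hx hy hxy)

theorem rpow_add_rpow_le_two_rpow_mul_rpow_add {r a b : ℝ} (hr₀ : 0 ≤ r) (hr₁ : r ≤ 1)
    (ha : 0 ≤ a) (hb : 0 ≤ b) :
    a ^ r + b ^ r ≤ 2 ^ (1 - r) * (a + b) ^ r := by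
  have hmid := (concaveOn_rpow hr₀ hr₁).2 ha hb (by norm_num : (0 : ℝ) ≤ 1 / 2)
    (by norm_num : (0 : ℝ) ≤ 1 / 2) (by norm_num)
  simp only [smul_eq_mul] at hmid
  rw [← mul_add, ← mul_add] at hmid
  simp only [one_div_mul_eq_div] at hmid
  rw [div_rpow (add_nonneg ha hb) zero_le_two] at hmid
  have h2r : 0 < (2 : ℝ) ^ r := rpow_pos_of_pos two_pos r
  calc a ^ r + b ^ r = 2 * ((a ^ r + b ^ r) / 2) := by ring
    _ ≤ 2 * ((a + b) ^ r / 2 ^ r) := by gcongr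
    _ = 2 ^ (1 - r) * (a + b) ^ r := by rw [rpow_sub two_pos, rpow_one]; ring

theorem IsLowerSet.Ioc_inter_eq_Ioo_or_Ioc {X : Type*} [ConditionallyCompleteLinearOrder X]
    {S : Set X} (hS : IsLowerSet S) {a b : X} (hab : a ≤ b) :
    ∃ c ∈ Icc a b, Ioc a b ∩ S = Ioo a c ∨ Ioc a b ∩ S = Ioc a c := by
  set T := Ioc a b ∩ S
  have hle : ∀ x ∈ insert a T, x ≤ b := by
    rintro x (rfl | hx)
    exacts [hab, hx.1.2]
  set c := sSup (insert a T)
  have hbdd : BddAbove (insert a T) := ⟨b, hle⟩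
  have hTc : T ⊆ Ioc a c := fun x hx => ⟨hx.1.1, le_csSup hbdd (mem_insert_of_mem a hx)⟩
  have hcT : Ioo a c ⊆ T := by
    intro x hx
    obtain ⟨y, hy, hxy⟩ := exists_lt_of_lt_csSup (insert_nonempty a T) hx.2
    rcases hy with rfl | hy
    · exact (lt_asymm hx.1 hxy).elim
    · exact ⟨⟨hx.1, hxy.le.trans hy.1.2⟩, hS hxy.le hy.2⟩
  refine ⟨c, ⟨le_csSup hbdd (mem_insert a T), csSup_le (insert_nonempty a T) hle⟩, ?_⟩
  by_cases hc : c ∈ T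
  · refine Or.inr (hTc.antisymm fun x hx => ?_)
    rcases hx.2.lt_or_eq with h | rfl
    exacts [hcT ⟨hx.1, h⟩, hc]
  · exact Or.inl (Subset.antisymm
      (fun x hx => ⟨(hTc hx).1, (hTc hx).2.lt_of_ne fun h => hc (h ▸ hx)⟩) hcT)

section

variable {α β : ℝ} {w ψ : ℝ → ℝ}

theorem setIntegral_Ioc_inter_nonneg_of_isLowerSet
    (hP : ∀ x ∈ Icc α β, 0 ≤ ∫ t in α..x, w t) (hab : α ≤ β) {S : Set ℝ} (hS : IsLowerSet S) :
    0 ≤ ∫ x in Ioc α β ∩ S, w x := by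
  obtain ⟨c, hc, h⟩ := hS.Ioc_inter_eq_Ioo_or_Ioc hab
  have hPc : 0 ≤ ∫ x in Ioc α c, w x := by
    rw [← integral_of_le hc.1]
    exact hP c hc
  rcases h with h | h
  · rwa [h, ← integral_Ioc_eq_integral_Ioo (f := w)]
  · rwa [h]

theorem AntitoneOn.intervalIntegrable_mul (hψ : AntitoneOn ψ (Icc α β)) (hab : α ≤ β)
    (hw : IntervalIntegrable w volume α β) :
    IntervalIntegrable (fun x => ψ x * w x) volume α β := by
  rw [intervalIntegrable_iff_integrableOn_Icc_of_le hab] at hw ⊢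
  refine hw.bdd_mul (hψ.integrableOn_isCompact isCompact_Icc).aestronglyMeasurable
    (c := max |ψ β| |ψ α|) (ae_restrict_of_forall_mem measurableSet_Icc fun x hx => ?_)
  exact abs_le_max_abs_abs (hψ hx ⟨hab, le_rfl⟩ hx.2) (hψ ⟨le_rfl, hab⟩ hx hx.1)

/-- Layer-cake formula: for `x ∈ (α, β]`, `ψ x - ψ β` is the length of
`{s ∈ (ψ β, ψ α] | s < ψ x}`; then swap the integrals. -/
theorem Antitone.integral_sub_mul_eq_integral_setIntegral (hψ : Antitone ψ) (hab : α ≤ β)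
    (hw : IntervalIntegrable w volume α β) :
    ∫ x in α..β, (ψ x - ψ β) * w x =
      ∫ s in Ioc (ψ β) (ψ α), ∫ x in Ioc α β ∩ {x | s < ψ x}, w x := by
  set E : Set (ℝ × ℝ) := {z | z.2 < ψ z.1}
  have hE : MeasurableSet E := measurableSet_lt measurable_snd (hψ.measurable.comp measurable_fst)
  have hF : Integrable (E.indicator fun z => w z.1)
      ((volume.restrict (Ioc α β)).prod (volume.restrict (Ioc (ψ β) (ψ α)))) :=
    (hw.1.comp_fst _).indicator hE
  have hinner : ∀ x ∈ Ioc α β,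
      ∫ s in Ioc (ψ β) (ψ α), E.indicator (fun z => w z.1) (x, s) = (ψ x - ψ β) * w x := by
    intro x hx
    have hψx : ψ x ∈ Icc (ψ β) (ψ α) := ⟨hψ hx.2, hψ hx.1.le⟩
    have hslice : Ioc (ψ β) (ψ α) ∩ Iio (ψ x) = Ioo (ψ β) (ψ x) :=
      Set.ext fun s => ⟨fun h => ⟨h.1.1, h.2⟩, fun h => ⟨⟨h.1, h.2.le.trans hψx.2⟩, h.2⟩⟩
    calc ∫ s in Ioc (ψ β) (ψ α), E.indicator (fun z => w z.1) (x, s)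
        = ∫ s in Ioc (ψ β) (ψ α), (Iio (ψ x)).indicator (fun _ => w x) s := rfl
      _ = (ψ x - ψ β) * w x := by
        rw [setIntegral_indicator measurableSet_Iio, hslice, setIntegral_const,
          volume_real_Ioo_of_le hψx.1, smul_eq_mul]
  rw [integral_of_le hab, ← setIntegral_congr_fun measurableSet_Ioc hinner,
    integral_integral_swap (f := fun x s => E.indicator (fun z => w z.1) (x, s)) hF]
  exact integral_congr_ae (ae_of_all _ fun s =>
    setIntegral_indicator (f := w) (measurableSet_lt measurable_const hψ.measurable))

theorem integral_mul_nonneg_of_antitoneOn (hab : α ≤ β) (hw : IntervalIntegrable w volume α β)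
    (hP : ∀ x ∈ Icc α β, 0 ≤ ∫ t in α..x, w t) (hψ : AntitoneOn ψ (Icc α β)) (hψβ : 0 ≤ ψ β) :
    0 ≤ ∫ x in α..β, ψ x * w x := by
  -- extended constantly outside `[α, β]`, `ψ` becomes globally antitone, hence measurable
  set φ : ℝ → ℝ := fun x => ψ (projIcc α β hab x)
  have hφ : Antitone φ := fun x y hxy =>
    hψ (projIcc α β hab x).2 (projIcc α β hab y).2 (monotone_projIcc hab hxy)
  have hφψ : ∀ x ∈ Icc α β, φ x = ψ x := fun x hx => by simp [φ, projIcc_of_mem hab hx]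
  have hφw : IntervalIntegrable (fun x => φ x * w x) volume α β :=
    (hφ.antitoneOn _).intervalIntegrable_mul hab hw
  have hlayer : 0 ≤ ∫ x in α..β, (φ x - φ β) * w x := by
    rw [hφ.integral_sub_mul_eq_integral_setIntegral hab hw]
    exact integral_nonneg fun s =>
      setIntegral_Ioc_inter_nonneg_of_isLowerSet hP hab fun x y hyx hx => hx.trans_le (hφ hyx)
  simp only [sub_mul] at hlayer
  rw [integral_sub hφw (hw.const_mul _), intervalIntegral.integral_const_mul,
    hφψ β ⟨hab, le_rfl⟩] at hlayer
  have hφψ_int : ∫ x in α..β, φ x * w x = ∫ x in α..β, ψ x * w x :=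
    integral_congr fun x hx => by simp only [hφψ x (uIcc_of_le hab ▸ hx)]
  linarith [mul_nonneg hψβ (hP β ⟨hab, le_rfl⟩)]

theorem integral_rpow_mul_add_integral_rpow_mul_le {p : ℝ} {f g : ℝ → ℝ} (hab : α ≤ β)
    (hp : 1 ≤ p) (hw : IntervalIntegrable w volume α β)
    (hP : ∀ x ∈ Icc α β, 0 ≤ ∫ t in α..x, w t)
    (hf0 : ∀ x ∈ Icc α β, 0 ≤ f x) (hf : AntitoneOn f (Icc α β))
    (hg0 : ∀ x ∈ Icc α β, 0 ≤ g x) (hg : AntitoneOn g (Icc α β)) :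
    (∫ x in α..β, f x ^ p * w x) + ∫ x in α..β, g x ^ p * w x ≤
      ∫ x in α..β, (f x + g x) ^ p * w x := by
  have hp₀ : 0 ≤ p := zero_le_one.trans hp
  have hβ : β ∈ Icc α β := ⟨hab, le_rfl⟩
  have hfw := (hf.rpow_const_of_nonneg hf0 hp₀).intervalIntegrable_mul hab hw
  have hgw := (hg.rpow_const_of_nonneg hg0 hp₀).intervalIntegrable_mul hab hw
  have hfgw := ((hf.add hg).rpow_const_of_nonneg
    (fun x hx => add_nonneg (hf0 x hx) (hg0 x hx)) hp₀).intervalIntegrable_mul hab hw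
  have h := integral_mul_nonneg_of_antitoneOn hab hw hP
    (hf.rpow_add_sub_rpow_sub_rpow hg hf0 hg0 hp)
    (by linarith [add_rpow_le_rpow_add (hf0 β hβ) (hg0 β hβ) hp])
  simp only [sub_mul] at h
  rw [integral_sub (hfgw.sub hfw) hgw, integral_sub hfgw hfw] at h
  linarith

end

theorem stmt_16_general (α β p : ℝ) (hab : α < β) (hp : 1 ≤ p) (w f g : ℝ → ℝ)
    (hw : IntervalIntegrable w volume α β)
    (hP : ∀ x ∈ Set.Icc α β, 0 ≤ ∫ t in α..x, w t)
    (hf0 : ∀ x ∈ Set.Icc α β, 0 ≤ f x)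
    (hf : AntitoneOn f (Set.Icc α β))
    (hg0 : ∀ x ∈ Set.Icc α β, 0 ≤ g x)
    (hg : AntitoneOn g (Set.Icc α β)) :
    (∫ x in α..β, f x ^ p * w x) ^ (1 / p) + (∫ x in α..β, g x ^ p * w x) ^ (1 / p) ≤
      2 ^ (1 - 1 / p) * (∫ x in α..β, (f x + g x) ^ p * w x) ^ (1 / p) := by
  have hp₀ : 0 ≤ p := zero_le_one.trans hp
  have hβ : β ∈ Icc α β := ⟨hab.le, le_rfl⟩
  have hIf := integral_mul_nonneg_of_antitoneOn hab.le hw hP (hf.rpow_const_of_nonneg hf0 hp₀)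
    (rpow_nonneg (hf0 β hβ) p)
  have hIg := integral_mul_nonneg_of_antitoneOn hab.le hw hP (hg.rpow_const_of_nonneg hg0 hp₀)
    (rpow_nonneg (hg0 β hβ) p)
  calc (∫ x in α..β, f x ^ p * w x) ^ (1 / p) + (∫ x in α..β, g x ^ p * w x) ^ (1 / p)
      ≤ 2 ^ (1 - 1 / p) * ((∫ x in α..β, f x ^ p * w x) + ∫ x in α..β, g x ^ p * w x) ^ (1 / p) :=
        rpow_add_rpow_le_two_rpow_mul_rpow_add (by positivity) (div_le_one_of_le₀ hp hp₀) hIf hIg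
    _ ≤ 2 ^ (1 - 1 / p) * (∫ x in α..β, (f x + g x) ^ p * w x) ^ (1 / p) := by
        gcongr
        exact integral_rpow_mul_add_integral_rpow_mul_le hab.le hp hw hP hf0 hf hg0 hg

theorem stmt_16 (α β p : ℝ) (hab : α < β) (hp : 1 ≤ p) (w f g : ℝ → ℝ)
    (hw : IntervalIntegrable w volume α β)
    (hP : ∀ x ∈ Set.Icc α β, 0 ≤ ∫ t in α..x, w t)
    (hf0 : ∀ x ∈ Set.Icc α β, 0 ≤ f x)
    (hf : AntitoneOn f (Set.Icc α β))
    (hfdiff : DifferentiableOn ℝ f (Set.Icc α β))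
    (hg0 : ∀ x ∈ Set.Icc α β, 0 ≤ g x)
    (hg : AntitoneOn g (Set.Icc α β))
    (hgdiff : DifferentiableOn ℝ g (Set.Icc α β))
    (hfpw : IntervalIntegrable (fun x => f x ^ p * w x) volume α β)
    (hgpw : IntervalIntegrable (fun x => g x ^ p * w x) volume α β)
    (hfgpw : IntervalIntegrable (fun x => (f x + g x) ^ p * w x) volume α β) :
    (∫ x in α..β, f x ^ p * w x) ^ (1 / p) + (∫ x in α..β, g x ^ p * w x) ^ (1 / p) ≤
      2 ^ (1 - 1 / p) * (∫ x in α..β, (f x + g x) ^ p * w x) ^ (1 / p) :=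
  stmt_16_general α β p hab hp w f g hw hP hf0 hf hg0 hg
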